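/- For every natural number n, Σ_{λ ∈ P(n)} ℓ(λ^o) = Σ_{λ ∈ P(n)} ℓ((λ^r)~), where the sums run over all partitions λ of n and (λ^r)~ denotes the 2-Glaisher image of the strict partition λ^r. -/

import Mathlib

/-- `s` is (the multiset of parts of) a partition of `n`: all parts are positive and sum to `n`. -/
def IsPartitionOf (n : ℕ) (s : Multiset ℕ) : Prop :=
  (∀ x ∈ s, 0 < x) ∧ s.sum = n

/-- `λ^r`: the part `i` occurs once if its multiplicity in `s` is odd, and not at all otherwise. -/
def rPart (s : Multiset ℕ) : Multiset ℕ :=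
  s.dedup.filter (fun i => Odd (s.count i))

/-- `λ^d`: the part `i` occurs `⌊m_i(λ)/2⌋` times (i.e. `(m_i-1)/2` if `m_i` odd, `m_i/2` if even). -/
def dPart (s : Multiset ℕ) : Multiset ℕ :=
  ∑ i ∈ s.toFinset, Multiset.replicate (s.count i / 2) i

/-- `λ^o`: the odd parts of `λ`. -/
def oPart (s : Multiset ℕ) : Multiset ℕ :=
  s.filter (fun x => Odd x)

/-- `λ^e`: the halves of the even parts of `λ`. -/
def ePart (s : Multiset ℕ) : Multiset ℕ :=
  (s.filter (fun x => Even x)).map (fun x => x / 2)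

/-- The `p`-Glaisher map: each part `x = p^a * q` (with `p ∤ q`) is replaced by `p^a` copies of `q`. -/
def glaisher (p : ℕ) (s : Multiset ℕ) : Multiset ℕ :=
  s.bind (fun x => Multiset.replicate (p ^ (Nat.factorization x p)) (x / p ^ (Nat.factorization x p)))

/-- `λ^{r(p)}`: the part `i` occurs `m_i(λ) mod p` times. -/
def rPartP (p : ℕ) (s : Multiset ℕ) : Multiset ℕ :=
  ∑ i ∈ s.toFinset, Multiset.replicate (s.count i % p) i

/-- `λ^{d(p)}`: the part `i` occurs `(m_i(λ) - (m_i(λ) mod p))/p` times. -/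
def dPartP (p : ℕ) (s : Multiset ℕ) : Multiset ℕ :=
  ∑ i ∈ s.toFinset, Multiset.replicate (s.count i / p) i

/-!
Every partition splits as `λ = λ^r ⊎ 2 × λ^d`, where `λ^d` takes each part `i` with multiplicity
`⌊m_i(λ) / 2⌋`. The map `λ ↦ (λ^r)~ ⊎ 2·λ^d` preserves the size, and it is injective: the odd
parts of the image are `(λ^r)~`, which determines the strict partition `λ^r` by uniqueness of
binary expansions, and the halved even parts are `λ^d`. Hence it permutes `P(n)`, and it carries
`ℓ((λ^r)~)` to the number of odd parts of the image.
-/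

open Multiset

section rPart_dPart

lemma count_rPart (s : Multiset ℕ) (i : ℕ) : (rPart s).count i = s.count i % 2 := by
  rw [rPart, count_filter]
  by_cases hi : i ∈ s
  · by_cases ho : Odd (s.count i)
    · simp [ho, hi, Nat.odd_iff.1 ho]
    · simp [ho, Nat.even_iff.1 (Nat.not_odd_iff_even.1 ho)]
  · simp [count_eq_zero.2 hi]

lemma count_dPart (s : Multiset ℕ) (i : ℕ) : (dPart s).count i = s.count i / 2 := by
  rw [dPart, count_sum', Finset.sum_eq_single i]
  · simp
  · intro j _ hj
    simp [count_replicate, hj]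
  · intro hi
    simp [count_eq_zero.2 (mt mem_toFinset.2 hi)]

lemma rPart_add_dPart_add_dPart (s : Multiset ℕ) : rPart s + dPart s + dPart s = s := by
  ext i
  simp only [count_add, count_rPart, count_dPart]
  omega

lemma nodup_rPart (s : Multiset ℕ) : (rPart s).Nodup := s.nodup_dedup.filter _

lemma rPart_le (s : Multiset ℕ) : rPart s ≤ s :=
  le_iff_count.2 fun i => by rw [count_rPart]; exact Nat.mod_le _ _

lemma dPart_le (s : Multiset ℕ) : dPart s ≤ s :=
  le_iff_count.2 fun i => by rw [count_dPart]; exact Nat.div_le_self _ _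

end rPart_dPart

section glaisher

variable (p : ℕ)

lemma sum_glaisher (s : Multiset ℕ) : (glaisher p s).sum = s.sum := by
  rw [glaisher, sum_bind]
  congr 1
  refine (map_congr rfl fun x _ => ?_).trans (map_id s)
  rw [sum_replicate, smul_eq_mul, id, Nat.ordProj_mul_ordCompl_eq_self]

lemma count_glaisher (s : Multiset ℕ) (q : ℕ) :
    (glaisher p s).count q = ((s.filter (ordCompl[p] · = q)).map (ordProj[p] ·)).sum := by
  induction s using Multiset.induction with
  | empty => simp [glaisher]
  | cons a t ih =>
    rw [glaisher, cons_bind, count_add, ← glaisher, ih, filter_cons]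
    by_cases h : ordCompl[p] a = q <;> simp [h, count_replicate]

variable {p}

lemma exists_ordCompl_eq_of_mem_glaisher {s : Multiset ℕ} {x : ℕ} (hx : x ∈ glaisher p s) :
    ∃ y ∈ s, ordCompl[p] y = x := by
  obtain ⟨y, hy, hxy⟩ := mem_bind.1 hx
  exact ⟨y, hy, (eq_of_mem_replicate hxy).symm⟩

lemma pos_of_mem_glaisher {s : Multiset ℕ} (hs : ∀ y ∈ s, 0 < y) {x : ℕ}
    (hx : x ∈ glaisher p s) : 0 < x := by
  obtain ⟨y, hy, rfl⟩ := exists_ordCompl_eq_of_mem_glaisher hx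
  exact Nat.ordCompl_pos p (hs y hy).ne'

lemma not_dvd_of_mem_glaisher (hp : p.Prime) {s : Multiset ℕ} (hs : ∀ y ∈ s, 0 < y) {x : ℕ}
    (hx : x ∈ glaisher p s) : ¬ p ∣ x := by
  obtain ⟨y, hy, rfl⟩ := exists_ordCompl_eq_of_mem_glaisher hx
  exact Nat.not_dvd_ordCompl hp (hs y hy).ne'

variable (p)

def glaisherExponents (s : Multiset ℕ) (q : ℕ) : Finset ℕ :=
  ((s.filter (ordCompl[p] · = q)).map (·.factorization p)).toFinset

lemma eq_of_factorization_eq_of_ordCompl_eq {x y : ℕ} (hv : x.factorization p = y.factorization p)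
    (hq : ordCompl[p] x = ordCompl[p] y) : x = y := by
  rw [← Nat.ordProj_mul_ordCompl_eq_self x p, ← Nat.ordProj_mul_ordCompl_eq_self y p, hq, hv]

lemma count_glaisher_of_nodup {s : Multiset ℕ} (hs : s.Nodup) (q : ℕ) :
    (glaisher p s).count q = ∑ a ∈ glaisherExponents p s q, p ^ a := by
  have hinj : ((s.filter (ordCompl[p] · = q)).map (·.factorization p)).Nodup :=
    (hs.filter _).map_on fun x hx y hy hxy =>
      eq_of_factorization_eq_of_ordCompl_eq p hxy
        ((mem_filter.1 hx).2.trans (mem_filter.1 hy).2.symm)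
  rw [count_glaisher, glaisherExponents, Finset.sum_eq_multiset_sum, toFinset_val,
    hinj.dedup, map_map]
  rfl

lemma mem_iff_factorization_mem_glaisherExponents (s : Multiset ℕ) (x : ℕ) :
    x ∈ s ↔ x.factorization p ∈ glaisherExponents p s (ordCompl[p] x) := by
  simp only [glaisherExponents, mem_toFinset, mem_map, mem_filter]
  refine ⟨fun hx => ⟨x, ⟨hx, rfl⟩, rfl⟩, ?_⟩
  rintro ⟨y, ⟨hy, hq⟩, hv⟩
  rwa [← eq_of_factorization_eq_of_ordCompl_eq p hv hq]

variable {p}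

/-- The multiplicity of `q` in the image of a strict partition is `∑ p ^ a` over its parts
`p ^ a * q`, so the base-`p` expansion of that multiplicity recovers these parts. -/
lemma glaisher_injOn_nodup (hp : 2 ≤ p) : Set.InjOn (glaisher p) {s | s.Nodup} := by
  intro s hs t ht hst
  have hexp : ∀ q, glaisherExponents p s q = glaisherExponents p t q := fun q =>
    Finset.geomSum_injective hp <| by
      simp only [← count_glaisher_of_nodup p hs, ← count_glaisher_of_nodup p ht, hst]
  refine (Nodup.ext hs ht).2 fun x => ?_
  rw [mem_iff_factorization_mem_glaisherExponents p, mem_iff_factorization_mem_glaisherExponents p,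
    hexp]

end glaisher

lemma odd_of_mem_glaisher_two {s : Multiset ℕ} (hs : ∀ y ∈ s, 0 < y) {x : ℕ}
    (hx : x ∈ glaisher 2 s) : Odd x :=
  Nat.odd_iff.2 (Nat.two_dvd_ne_zero.1 (not_dvd_of_mem_glaisher Nat.prime_two hs hx))

section rdMerge

def rdMerge (s : Multiset ℕ) : Multiset ℕ :=
  glaisher 2 (rPart s) + (dPart s).map (2 * ·)

variable {s : Multiset ℕ}

lemma pos_of_mem_rPart (hs : ∀ y ∈ s, 0 < y) : ∀ y ∈ rPart s, 0 < y :=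
  fun y hy => hs y (mem_of_le (rPart_le s) hy)

lemma oPart_rdMerge (hs : ∀ y ∈ s, 0 < y) : oPart (rdMerge s) = glaisher 2 (rPart s) := by
  rw [oPart, rdMerge, filter_add, filter_eq_self.2 fun x hx =>
    odd_of_mem_glaisher_two (pos_of_mem_rPart hs) hx, filter_eq_nil.2, add_zero]
  rintro _ hx
  obtain ⟨y, -, rfl⟩ := mem_map.1 hx
  exact Nat.not_odd_iff_even.2 (even_two_mul y)

lemma ePart_rdMerge (hs : ∀ y ∈ s, 0 < y) : ePart (rdMerge s) = dPart s := by
  rw [ePart, rdMerge, filter_add, filter_eq_nil.2 fun x hx =>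
    Nat.not_even_iff_odd.2 (odd_of_mem_glaisher_two (pos_of_mem_rPart hs) hx), zero_add,
    filter_eq_self.2, map_map]
  · exact (map_congr rfl fun x _ => Nat.mul_div_cancel_left x two_pos).trans (map_id _)
  · rintro _ hx
    obtain ⟨y, -, rfl⟩ := mem_map.1 hx
    exact even_two_mul y

lemma sum_rdMerge (s : Multiset ℕ) : (rdMerge s).sum = s.sum := by
  conv_rhs => rw [← rPart_add_dPart_add_dPart s]
  rw [rdMerge, sum_add, sum_glaisher, sum_map_mul_left, map_id', sum_add, sum_add]
  ring

lemma pos_of_mem_rdMerge (hs : ∀ y ∈ s, 0 < y) : ∀ y ∈ rdMerge s, 0 < y := by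
  intro y hy
  rcases mem_add.1 hy with hy | hy
  · exact pos_of_mem_glaisher (pos_of_mem_rPart hs) hy
  · obtain ⟨x, hx, rfl⟩ := mem_map.1 hy
    exact Nat.mul_pos two_pos (hs x (mem_of_le (dPart_le s) hx))

lemma rdMerge_injOn : Set.InjOn rdMerge {s | ∀ y ∈ s, 0 < y} := by
  intro s hs t ht hst
  have hr : rPart s = rPart t :=
    glaisher_injOn_nodup le_rfl (nodup_rPart s) (nodup_rPart t) <| by
      rw [← oPart_rdMerge hs, ← oPart_rdMerge ht, hst]
  have hd : dPart s = dPart t := by rw [← ePart_rdMerge hs, ← ePart_rdMerge ht, hst]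
  rw [← rPart_add_dPart_add_dPart s, ← rPart_add_dPart_add_dPart t, hr, hd]

end rdMerge

namespace Nat.Partition

variable {n : ℕ}

def rdMerge (μ : n.Partition) : n.Partition where
  parts := _root_.rdMerge μ.parts
  parts_pos hi := pos_of_mem_rdMerge (fun _ => μ.parts_pos) _ hi
  parts_sum := (sum_rdMerge μ.parts).trans μ.parts_sum

lemma rdMerge_bijective : Function.Bijective (rdMerge (n := n)) :=
  Finite.injective_iff_bijective.1 fun μ ν h => Nat.Partition.ext <|
    rdMerge_injOn (fun _ => μ.parts_pos) (fun _ => ν.parts_pos) (congrArg parts h)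

end Nat.Partition

/-- `Σ_{λ ∈ P(n)} ℓ(λ^o) = Σ_{λ ∈ P(n)} ℓ((λ^r)~)`, where `(λ^r)~` is the 2-Glaisher image
of `λ^r`. -/
theorem stmt13 (n : ℕ) :
    ∑ μ : Nat.Partition n, (oPart μ.parts).card =
      ∑ μ : Nat.Partition n, (glaisher 2 (rPart μ.parts)).card :=
  (Fintype.sum_bijective _ Nat.Partition.rdMerge_bijective _ _ fun μ => by
    rw [Nat.Partition.rdMerge, oPart_rdMerge fun _ => μ.parts_pos]).symm
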